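/- Let φ : [0,∞) → [0,∞) be a bounded, continuous, strictly increasing function, and for an mm-space X set Avr_φ(X) := ∫_{X×X} φ(d_X(x,x')) d(μ_X⊗μ_X)(x,x'). If X ≺ Y then Avr_φ(X) ≤ Avr_φ(Y); moreover, if X ≺ Y and Avr_φ(X) = Avr_φ(Y), then X and Y are mm-isomorphic. -/

import Mathlib

/-!
Push everything to `Y × Y` along `f × f`, where `f : Y → X` is 1-Lipschitz with `f_* μY = μX`:
`Avr_φ(X)` and `Avr_φ(Y)` become the integrals of `φ (d_X (f y, f y'))` and `φ (d_Y (y, y'))`,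
and the first integrand is pointwise below the second since `φ` is monotone. If the integrals
agree, the integrands agree almost everywhere, hence everywhere by continuity (`μY ⊗ μY` charges
every open set), and injectivity of `φ` makes `f` an isometry. Its range is closed (`Y` is
complete) and dense (`μX` charges every open set), so `f` is bijective.
-/

open MeasureTheory

/-- `LipDom μX μY` means `(X, μX)` Lipschitz dominates `(Y, μY)`, i.e. `Y ≺ X`. -/
def LipDom {X Y : Type*} [PseudoMetricSpace X] [PseudoMetricSpace Y]
    [MeasurableSpace X] [MeasurableSpace Y] (μX : Measure X) (μY : Measure Y) : Prop :=
  ∃ f : X → Y, LipschitzWith 1 f ∧ Measure.map f μX = μY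

/-- mm-isomorphism: a measure-preserving surjective isometry. -/
def MMIsomorphic {X Y : Type*} [PseudoMetricSpace X] [PseudoMetricSpace Y]
    [MeasurableSpace X] [MeasurableSpace Y] (μX : Measure X) (μY : Measure Y) : Prop :=
  ∃ f : X → Y, Isometry f ∧ Function.Surjective f ∧ Measure.map f μX = μY

/-- `Avr_φ(X) = ∫_{X×X} φ(d_X(x,x')) d(μ_X ⊗ μ_X)`. -/
noncomputable def avr {X : Type*} [PseudoMetricSpace X] [MeasurableSpace X]
    (φ : ℝ → ℝ) (μ : Measure X) : ℝ :=
  ∫ p : X × X, φ (dist p.1 p.2) ∂(μ.prod μ)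

open Set

theorem denseRange_of_map_eq {X Y : Type*} [TopologicalSpace X] [MeasurableSpace X]
    [OpensMeasurableSpace X] [MeasurableSpace Y] {μ : Measure Y} {ν : Measure X}
    [ν.IsOpenPosMeasure] {f : Y → X} (hf : Measurable f) (hmap : μ.map f = ν) :
    DenseRange f := by
  have hopen : IsOpen (closure (range f))ᶜ := isClosed_closure.isOpen_compl
  have hnull : ν (closure (range f))ᶜ = 0 := by
    rw [← hmap, Measure.map_apply hf hopen.measurableSet, preimage_compl,
      preimage_eq_univ_iff.2 subset_closure, compl_univ, measure_empty]
  exact dense_iff_closure_eq.2 (compl_empty_iff.1 ((hopen.measure_eq_zero_iff ν).1 hnull))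

section MetricMeasure

variable {X Y : Type*} [MetricSpace X] [MeasurableSpace X] [BorelSpace X]
  [MetricSpace Y] [MeasurableSpace Y] [BorelSpace Y] {μX : Measure X} {μY : Measure Y}

theorem Isometry.surjective_of_map_eq [CompleteSpace Y] [μX.IsOpenPosMeasure] {f : Y → X}
    (hf : Isometry f) (hmap : μY.map f = μX) : Function.Surjective f := by
  have hdense := denseRange_of_map_eq hf.continuous.measurable hmap
  rw [← range_eq_univ, ← hf.isClosedEmbedding.isClosed_range.closure_eq]
  exact hdense.closure_range

theorem mmIsomorphic_of_isometry_of_surjective {f : Y → X} (hf : Isometry f)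
    (hsurj : Function.Surjective f) (hmap : μY.map f = μX) : MMIsomorphic μX μY := by
  let e : Y ≃ᵢ X := ⟨Equiv.ofBijective f ⟨hf.injective, hsurj⟩, hf⟩
  refine ⟨e.symm, e.symm.isometry, e.symm.surjective, ?_⟩
  rw [← hmap, Measure.map_map e.symm.continuous.measurable hf.continuous.measurable]
  have hid : ⇑e.symm ∘ f = id := funext e.symm_apply_apply
  rw [hid, Measure.map_id]

end MetricMeasure

theorem integrable_comp_of_continuousOn_Ici {α : Type*} [TopologicalSpace α] [MeasurableSpace α]
    [OpensMeasurableSpace α] (μ : Measure α) [IsFiniteMeasure μ] {φ : ℝ → ℝ}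
    (hφ : ContinuousOn φ (Ici 0)) (hφnonneg : ∀ t, 0 ≤ t → 0 ≤ φ t) {C : ℝ}
    (hφC : ∀ t, 0 ≤ t → φ t ≤ C) {u : α → ℝ} (hu : Continuous u) (hu_nonneg : ∀ a, 0 ≤ u a) :
    Integrable (fun a ↦ φ (u a)) μ := by
  refine (integrable_const C).mono'
    (hφ.comp_continuous hu hu_nonneg).aestronglyMeasurable (ae_of_all _ fun a ↦ ?_)
  rw [Real.norm_eq_abs, abs_of_nonneg (hφnonneg _ (hu_nonneg a))]
  exact hφC _ (hu_nonneg a)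

section Avr

variable {X Y : Type*} [PseudoMetricSpace X] [PseudoMetricSpace Y] {φ : ℝ → ℝ}

theorem continuous_comp_dist_comp (hφ : ContinuousOn φ (Ici 0)) {f : Y → X}
    (hf : Continuous f) : Continuous fun q : Y × Y ↦ φ (dist (f q.1) (f q.2)) :=
  hφ.comp_continuous ((hf.comp continuous_fst).dist (hf.comp continuous_snd))
    fun _ ↦ dist_nonneg

theorem MonotoneOn.comp_dist_le_of_lipschitzWith_one (hφ : MonotoneOn φ (Ici 0)) {f : Y → X}
    (hf : LipschitzWith 1 f) (a b : Y) : φ (dist (f a) (f b)) ≤ φ (dist a b) :=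
  hφ dist_nonneg dist_nonneg (by simpa using hf.dist_le_mul a b)

variable [MeasurableSpace X] [BorelSpace X] [SecondCountableTopology X]
  [MeasurableSpace Y] [BorelSpace Y] {μX : Measure X} {μY : Measure Y}

theorem avr_eq_integral_of_map_eq [SFinite μY] (hφ : ContinuousOn φ (Ici 0)) {f : Y → X}
    (hf : Continuous f) (hmap : μY.map f = μX) :
    avr φ μX = ∫ q : Y × Y, φ (dist (f q.1) (f q.2)) ∂(μY.prod μY) := by
  have hmap_prod : (μY.prod μY).map (Prod.map f f) = μX.prod μX := by
    rw [← Measure.map_prod_map _ _ hf.measurable hf.measurable, hmap]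
  rw [avr, ← hmap_prod]
  exact integral_map (hf.measurable.prodMap hf.measurable).aemeasurable
    (continuous_comp_dist_comp hφ continuous_id).aestronglyMeasurable

variable [SecondCountableTopology Y] [IsFiniteMeasure μY]

theorem avr_le_avr_of_lipschitzWith (hφcont : ContinuousOn φ (Ici 0))
    (hφmono : MonotoneOn φ (Ici 0)) (hφnonneg : ∀ t, 0 ≤ t → 0 ≤ φ t) {C : ℝ}
    (hφC : ∀ t, 0 ≤ t → φ t ≤ C) {f : Y → X} (hf : LipschitzWith 1 f)
    (hmap : μY.map f = μX) : avr φ μX ≤ avr φ μY := by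
  rw [avr_eq_integral_of_map_eq hφcont hf.continuous hmap, avr]
  exact integral_mono
    (integrable_comp_of_continuousOn_Ici _ hφcont hφnonneg hφC
      (hf.continuous.fst'.dist hf.continuous.snd') fun _ ↦ dist_nonneg)
    (integrable_comp_of_continuousOn_Ici _ hφcont hφnonneg hφC
      (continuous_fst.dist continuous_snd) fun _ ↦ dist_nonneg)
    fun q ↦ hφmono.comp_dist_le_of_lipschitzWith_one hf q.1 q.2

theorem isometry_of_avr_eq [μY.IsOpenPosMeasure] (hφcont : ContinuousOn φ (Ici 0))
    (hφmono : StrictMonoOn φ (Ici 0)) (hφnonneg : ∀ t, 0 ≤ t → 0 ≤ φ t) {C : ℝ}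
    (hφC : ∀ t, 0 ≤ t → φ t ≤ C) {f : Y → X} (hf : LipschitzWith 1 f)
    (hmap : μY.map f = μX) (heq : avr φ μX = avr φ μY) : Isometry f := by
  have hdist_f : Continuous fun q : Y × Y ↦ dist (f q.1) (f q.2) :=
    hf.continuous.fst'.dist hf.continuous.snd'
  have hdist : Continuous fun q : Y × Y ↦ dist q.1 q.2 := continuous_fst.dist continuous_snd
  have hae : (fun q : Y × Y ↦ φ (dist (f q.1) (f q.2))) =ᵐ[μY.prod μY]
      fun q ↦ φ (dist q.1 q.2) := by
    rw [avr_eq_integral_of_map_eq hφcont hf.continuous hmap, avr] at heq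
    refine (integral_eq_iff_of_ae_le ?_ ?_ ?_).1 heq
    · exact integrable_comp_of_continuousOn_Ici _ hφcont hφnonneg hφC hdist_f
        fun _ ↦ dist_nonneg
    · exact integrable_comp_of_continuousOn_Ici _ hφcont hφnonneg hφC hdist
        fun _ ↦ dist_nonneg
    · exact ae_of_all _ fun q ↦ hφmono.monotoneOn.comp_dist_le_of_lipschitzWith_one hf q.1 q.2
  have hdist_eq : (fun q : Y × Y ↦ dist (f q.1) (f q.2)) = fun q ↦ dist q.1 q.2 := by
    refine (hdist_f.ae_eq_iff_eq (μY.prod μY) hdist).1 ?_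
    filter_upwards [hae] with q hq
    exact hφmono.injOn dist_nonneg dist_nonneg hq
  exact Isometry.of_dist_eq fun a b ↦ congrFun hdist_eq (a, b)

end Avr

theorem avr_mono_of_lipDom_general {X Y : Type*}
    [MetricSpace X] [TopologicalSpace.SeparableSpace X]
    [MeasurableSpace X] [BorelSpace X]
    [MetricSpace Y] [CompleteSpace Y] [TopologicalSpace.SeparableSpace Y]
    [MeasurableSpace Y] [BorelSpace Y]
    (μX : Measure X) (μY : Measure Y)
    [IsProbabilityMeasure μY]
    [μX.IsOpenPosMeasure] [μY.IsOpenPosMeasure]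
    (φ : ℝ → ℝ) (hφcont : ContinuousOn φ (Set.Ici 0))
    (hφmono : StrictMonoOn φ (Set.Ici 0))
    (hφnonneg : ∀ t, 0 ≤ t → 0 ≤ φ t)
    (hφbdd : ∃ C : ℝ, ∀ t, 0 ≤ t → φ t ≤ C)
    (hdom : LipDom μY μX) :
    avr φ μX ≤ avr φ μY ∧ (avr φ μX = avr φ μY → MMIsomorphic μX μY) := by
  obtain ⟨f, hf, hmap⟩ := hdom
  obtain ⟨C, hφC⟩ := hφbdd
  refine ⟨avr_le_avr_of_lipschitzWith hφcont hφmono.monotoneOn hφnonneg hφC hf hmap,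
    fun heq ↦ ?_⟩
  have hiso := isometry_of_avr_eq hφcont hφmono hφnonneg hφC hf hmap heq
  exact mmIsomorphic_of_isometry_of_surjective hiso (hiso.surjective_of_map_eq hmap) hmap

/-- for a bounded, continuous, strictly increasing
`φ : [0,∞) → [0,∞)`, if `X ≺ Y` then `Avr_φ(X) ≤ Avr_φ(Y)`, and if in addition
`Avr_φ(X) = Avr_φ(Y)` then `X` and `Y` are mm-isomorphic. -/
theorem avr_mono_of_lipDom {X Y : Type*}
    [MetricSpace X] [CompleteSpace X] [TopologicalSpace.SeparableSpace X]
    [MeasurableSpace X] [BorelSpace X]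
    [MetricSpace Y] [CompleteSpace Y] [TopologicalSpace.SeparableSpace Y]
    [MeasurableSpace Y] [BorelSpace Y]
    (μX : Measure X) (μY : Measure Y)
    [IsProbabilityMeasure μX] [IsProbabilityMeasure μY]
    [μX.IsOpenPosMeasure] [μY.IsOpenPosMeasure]
    (φ : ℝ → ℝ) (hφcont : ContinuousOn φ (Set.Ici 0))
    (hφmono : StrictMonoOn φ (Set.Ici 0))
    (hφnonneg : ∀ t, 0 ≤ t → 0 ≤ φ t)
    (hφbdd : ∃ C : ℝ, ∀ t, 0 ≤ t → φ t ≤ C)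
    (hdom : LipDom μY μX) :
    avr φ μX ≤ avr φ μY ∧ (avr φ μX = avr φ μY → MMIsomorphic μX μY) :=
  avr_mono_of_lipDom_general μX μY φ hφcont hφmono hφnonneg hφbdd hdom
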